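/- arXiv:0711.5020 — 3 statements merged into one kernel-verified Lean document; each statement's English description precedes it below -/
import Mathlib

section
/- Let p be an odd prime and let y generate H¹(BC_p; F_p). Then the triple Massey product ⟨y,y,y⟩ is a well-defined single element of H²(BC_p; F_p) (the indeterminacy is zero), and ⟨y,y,y⟩ = 0 if p > 3, while ⟨y,y,y⟩ = β(y) for p = 3, where β is the mod-p Bockstein. -/
/-!
An additive map `ZMod p → ZMod p` is multiplication by its value at `1`, so `y g = c g`.
Since `2` is invertible, `k g h` is the coboundary of `-(k/2) x²`; this makes every cup
product `y ⌣ y'` a coboundary and forces the defining cochains to be `a = -(c²/2) x² + A x`,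
and `b` likewise.
The Massey representative is then `(c³/2) g h (g + h)` up to a coboundary, and
`δ(x³) = -3 g h (g + h)` makes it a coboundary when `p > 3`. For `p = 3`, lift `g, h` to
`G, H ∈ {0, 1, 2}` and write `G + H = r + 3 κ`: from `(G + H)³ ≡ r³ (mod 9)` one gets
`g h (g + h) = -κ - δq` with `q(x) = (x³ - x)/3`, and `c³/2 = -c` turns this into `c κ`,
the Bockstein of `y`.
-/

def coboundary {G R : Type*} [Add G] [AddCommGroup R] (f : G → R) (g h : G) : R :=
  f g + f h - f (g + h)

lemma ZMod.natCast_ne_zero_of_pos_of_lt {n p : ℕ} (h0 : 0 < n) (hn : n < p) :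
    (n : ZMod p) ≠ 0 := by
  rw [Ne, ZMod.natCast_eq_zero_iff]
  exact fun h => (Nat.le_of_dvd h0 h).not_gt hn

lemma ZMod.map_eq_mul_of_map_add {n : ℕ} {f : ZMod n → ZMod n}
    (hf : ∀ g h, f (g + h) = f g + f h) (g : ZMod n) : f g = f 1 * g := by
  simpa [mul_comm] using ((AddMonoidHom.mk' f hf).toZModLinearMap n).map_smul g 1

lemma mul_mul_eq_coboundary {R : Type*} [Field R] (h2 : (2 : R) ≠ 0) (k g h : R) :
    k * g * h = coboundary (fun x => -(k / 2) * x ^ 2) g h := by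
  simp only [coboundary]; field_simp; ring

lemma mul_mul_add_eq_coboundary {R : Type*} [Field R] (h3 : (3 : R) ≠ 0) (g h : R) :
    g * h * (g + h) = coboundary (fun x => -x ^ 3 / 3) g h := by
  simp only [coboundary]; field_simp; ring

-- The carry cocycle `κ`, representing the Bockstein of the identity class.
def carry (p : ℕ) (g h : ZMod p) : ZMod p := ((g.val + h.val) / p : ℕ)

lemma ZMod.mul_mul_add_eq_neg_carry_sub_coboundary (g h : ZMod 3) :
    g * h * (g + h) =
      -carry 3 g h -
        coboundary (fun x : ZMod 3 => (((x.val ^ 3 - x.val) / 3 : ℕ) : ZMod 3)) g h := by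
  revert g h; decide

namespace ZMod
variable {p : ℕ} [Fact p.Prime]

lemma eq_of_coboundary_eq_mul_mul (h2 : (2 : ZMod p) ≠ 0) {k : ZMod p} {a : ZMod p → ZMod p}
    (ha : ∀ g h, coboundary a g h = k * g * h) (g : ZMod p) :
    a g = -(k / 2) * g ^ 2 + (a 1 + k / 2) * g := by
  set f : ZMod p → ZMod p := fun x => a x + k / 2 * x ^ 2 with hf
  have hadd : ∀ g h, f (g + h) = f g + f h := by
    intro g h
    have := (ha g h).trans (mul_mul_eq_coboundary h2 k g h)
    simp only [coboundary, hf] at this ⊢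
    linear_combination -this
  have := map_eq_mul_of_map_add hadd g
  simp only [hf] at this
  linear_combination this

lemma massey_representative_eq (h2 : (2 : ZMod p) ≠ 0) {c : ZMod p} {a b : ZMod p → ZMod p}
    (ha : ∀ g h, coboundary a g h = c * g * (c * h))
    (hb : ∀ g h, coboundary b g h = c * g * (c * h)) (g h : ZMod p) :
    -(c * g * b h) - a g * (c * h) =
      c ^ 3 / 2 * (g * h * (g + h)) +
        coboundary (fun x => c * (a 1 + b 1 + c ^ 2) / 2 * x ^ 2) g h := by
  have ha' := eq_of_coboundary_eq_mul_mul h2 (k := c ^ 2) (fun g h => (ha g h).trans (by ring))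
  have hb' := eq_of_coboundary_eq_mul_mul h2 (k := c ^ 2) (fun g h => (hb g h).trans (by ring))
  rw [ha' g, hb' h]
  simp only [coboundary]
  field_simp
  ring

end ZMod

theorem stmt_4_general (p : ℕ) (hp : p.Prime) (hodd : Odd p)
    (y : ZMod p → ZMod p) (hadd : ∀ g h : ZMod p, y (g + h) = y g + y h) :
    (∀ y' : ZMod p → ZMod p, (∀ g h : ZMod p, y' (g + h) = y' g + y' h) →
      ∃ t : ZMod p → ZMod p, ∀ g h : ZMod p, y g * y' h = t g + t h - t (g + h)) ∧
    (∀ a b : ZMod p → ZMod p,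
      (∀ g h : ZMod p, a g + a h - a (g + h) = y g * y h) →
      (∀ g h : ZMod p, b g + b h - b (g + h) = y g * y h) →
      ∃ s : ZMod p → ZMod p, ∀ g h : ZMod p,
        -(y g * b h) - a g * y h =
          (if p = 3 then y 1 * (((g.val + h.val) / p : ℕ) : ZMod p) else 0)
            + (s g + s h - s (g + h))) := by
  have : Fact p.Prime := ⟨hp⟩
  have hp2 : 2 < p := hp.two_le.lt_of_ne (by rintro rfl; exact absurd hodd (by decide))
  have h2 : (2 : ZMod p) ≠ 0 := by
    exact_mod_cast ZMod.natCast_ne_zero_of_pos_of_lt two_pos hp2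
  set c := y 1
  have hy : ∀ g, y g = c * g := ZMod.map_eq_mul_of_map_add hadd
  refine ⟨fun y' hy' => ⟨fun x => -(c * y' 1 / 2) * x ^ 2, fun g h => ?_⟩,
    fun a b ha hb => ?_⟩
  · rw [hy, ZMod.map_eq_mul_of_map_add hy']
    calc c * g * (y' 1 * h) = c * y' 1 * g * h := by ring
      _ = _ := mul_mul_eq_coboundary h2 _ g h
  have hyy : ∀ g h, y g * y h = c * g * (c * h) := fun g h => by rw [hy, hy]
  have hrep := ZMod.massey_representative_eq h2 (fun g h => (ha g h).trans (hyy g h))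
    (fun g h => (hb g h).trans (hyy g h))
  set s₀ := fun x => c * (a 1 + b 1 + c ^ 2) / 2 * x ^ 2
  by_cases hp3 : p = 3
  · subst hp3
    have hc : c ^ 3 / 2 = -c := by
      rw [ZMod.pow_card, div_eq_iff h2]
      have h3 : (3 : ZMod 3) = 0 := rfl
      linear_combination c * h3
    refine ⟨fun x => c * (((x.val ^ 3 - x.val) / 3 : ℕ) : ZMod 3) + s₀ x, fun g h => ?_⟩
    rw [if_pos rfl, hy, hy, hrep, ZMod.mul_mul_add_eq_neg_carry_sub_coboundary, hc]
    simp only [coboundary, carry]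
    ring
  · have h3 : (3 : ZMod p) ≠ 0 := by
      exact_mod_cast ZMod.natCast_ne_zero_of_pos_of_lt three_pos (by omega)
    refine ⟨fun x => c ^ 3 / 2 * (-x ^ 3 / 3) + s₀ x, fun g h => ?_⟩
    rw [if_neg hp3, hy, hy, hrep, mul_mul_add_eq_coboundary h3]
    simp only [coboundary]
    ring

/-- Massey product `⟨y,y,y⟩` in `H*(BC_p; F_p)` for odd `p`, computed with
inhomogeneous cochains for the group `C_p = ZMod p` with trivial coefficients `F_p`.
A `1`-cocycle is an additive function `y : ZMod p → ZMod p`; `y` generates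
`H¹(BC_p; F_p)` iff `y ≠ 0`.  For `1`-cochains the differential is
`(δa)(g,h) = a g + a h - a (g+h)`, and the cup product of `1`-cochains `u, v` is
`(u⌣v)(g,h) = u g * v h`.

First conjunct (indeterminacy is zero): the cup product of `y` with any `1`-cocycle
is a coboundary, so `⟨y,y,y⟩` is a single well-defined element of `H²`.

Second conjunct: for any choices of `1`-cochains `a, b` with `δa = δb = y⌣y`,
the Massey representative `(-1)^{deg y}·(y⌣b) - a⌣y` represents `0` if `p > 3`
and represents the Bockstein `β(y)` if `p = 3`; here `β(y)` is represented by the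
carry cocycle `(g,h) ↦ y 1 * ((g.val + h.val) / p)`. -/
theorem stmt_4 (p : ℕ) (hp : p.Prime) (hodd : Odd p)
    (y : ZMod p → ZMod p) (hadd : ∀ g h : ZMod p, y (g + h) = y g + y h)
    (hy : y ≠ 0) :
    (∀ y' : ZMod p → ZMod p, (∀ g h : ZMod p, y' (g + h) = y' g + y' h) →
      ∃ t : ZMod p → ZMod p, ∀ g h : ZMod p, y g * y' h = t g + t h - t (g + h)) ∧
    (∀ a b : ZMod p → ZMod p,
      (∀ g h : ZMod p, a g + a h - a (g + h) = y g * y h) →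
      (∀ g h : ZMod p, b g + b h - b (g + h) = y g * y h) →
      ∃ s : ZMod p → ZMod p, ∀ g h : ZMod p,
        -(y g * b h) - a g * y h =
          (if p = 3 then y 1 * (((g.val + h.val) / p : ℕ) : ZMod p) else 0)
            + (s g + s h - s (g + h))) :=
  stmt_4_general p hp hodd y hadd
end

section
/- Let p be an odd prime and consider the action of the cyclic group C_p on the polynomial ring F_p[α, β] (α, β of degree 2) where a generator fixes α and sends β to β + α. Then the fixed-point subring is generated by α and the element β^p − α^{p−1}β = ∏_{i=0}^{p−1}(β + iα); moreover a homogeneous element ∑_{i=1}^{m} λ_i α^{n−i} β^i with 1 ≤ m ≤ p−1 is fixed only if all λ_i = 0. -/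
/-!
Identifying `F_p[α, β]` with `F_p[α][β]`, the generator becomes the Taylor shift `β ↦ β + α`,
so everything reduces to translation-invariant polynomials over a domain of characteristic `p`.
The key fact is that such an invariant of degree `< p` is constant; the norm identity, the
description of the invariant ring and the vanishing of the `λ_i` all follow from it.
-/

open MvPolynomial

/-- The generator of the `C_p`-action on `F_p[α, β]` fixing `α = X 0` and sending
`β = X 1` to `β + α`. -/
noncomputable def sigmaGen (p : ℕ) :
    MvPolynomial (Fin 2) (ZMod p) →ₐ[ZMod p] MvPolynomial (Fin 2) (ZMod p) :=
  aeval ![X 0, X 1 + X 0]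

namespace Polynomial

section CommRing

variable {R : Type*} [CommRing R]

theorem eval_natCast_mul_of_taylor_eq_self {a : R} {f : R[X]} (hf : taylor a f = f) (n : ℕ) :
    f.eval (n * a) = f.eval 0 := by
  induction n with
  | zero => simp
  | succ n ih => rw [Nat.cast_succ, add_one_mul, ← taylor_eval, hf, ih]

variable (p : ℕ)

/-- The norm of `X` under translation by `a` in characteristic `p`, see
`prod_X_add_C_natCast_mul`. -/
noncomputable def translationNorm (a : R) : R[X] := X ^ p - C (a ^ (p - 1)) * X

theorem taylor_translationNorm [Fact p.Prime] [CharP R p] (a : R) :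
    taylor a (translationNorm p a) = translationNorm p a := by
  have hp := (Fact.out : p.Prime).one_lt
  have hpow : (C a) ^ p = C (a ^ (p - 1)) * C a := by
    rw [← C_mul, ← pow_succ, Nat.sub_add_cancel hp.le, C_pow]
  simp only [translationNorm, map_sub, taylor_X_pow, taylor_mul, taylor_C, taylor_X,
    add_pow_char, hpow]
  ring

variable {p}

theorem monic_translationNorm (hp : 1 < p) (a : R) : (translationNorm p a).Monic :=
  monic_X_pow_sub <| (degree_C_mul_X_le _).trans_lt <| by exact_mod_cast hp

theorem natDegree_translationNorm [Nontrivial R] (hp : 1 < p) (a : R) :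
    (translationNorm p a).natDegree = p := by
  rw [translationNorm, natDegree_sub_eq_left_of_natDegree_lt] <;> rw [natDegree_X_pow]
  exact (natDegree_C_mul_le _ _).trans_lt (by rwa [natDegree_X])

end CommRing

variable {R : Type*} [CommRing R] [IsDomain R] (p : ℕ) [CharP R p] {a : R}

/-- A translation-invariant polynomial of degree `< p` takes the same value at the `p` distinct
points `0, a, …, (p - 1) a`, so it is constant. -/
theorem eq_C_of_taylor_eq_self (ha : a ≠ 0) {f : R[X]} (hf : taylor a f = f)
    (hdeg : f.degree < p) : f = C (f.coeff 0) := by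
  rcases le_or_gt f.degree 0 with hf0 | hf0
  · exact eq_C_of_degree_le_zero hf0
  have hinj : Set.InjOn (fun i : ℕ => (i : R) * a) (Finset.range p) := by
    intro i hi j hj hij
    have := (CharP.natCast_eq_natCast R p).mp (mul_right_cancel₀ ha hij)
    exact this.eq_of_lt_of_lt (Finset.mem_range.mp hi) (Finset.mem_range.mp hj)
  refine sub_eq_zero.mp (eq_zero_of_degree_lt_of_eval_index_eq_zero _ hinj ?_ fun i _ => ?_)
  · rw [Finset.card_range]
    exact (degree_sub_le _ _).trans_lt (max_lt hdeg (degree_C_le.trans_lt (hf0.trans hdeg)))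
  · rw [eval_sub, eval_C, eval_natCast_mul_of_taylor_eq_self hf, coeff_zero_eq_eval_zero, sub_self]

theorem coeff_eq_zero_of_taylor_eq_self (ha : a ≠ 0) {f : R[X]} (hf : taylor a f = f)
    (hdeg : f.degree < p) {i : ℕ} (hi : i ≠ 0) : f.coeff i = 0 := by
  rw [eq_C_of_taylor_eq_self p ha hf hdeg, coeff_C, if_neg hi]

/-- The factors are permuted cyclically by translation by `a`, so their product differs from
the invariant `translationNorm p a` by an invariant of degree `< p` vanishing at `0`. -/
theorem prod_X_add_C_natCast_mul [Fact p.Prime] (ha : a ≠ 0) :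
    ∏ i ∈ Finset.range p, (X + C ((i : R) * a)) = translationNorm p a := by
  have hp := (Fact.out : p.Prime).one_lt
  set g : ℕ → R[X] := fun i => X + C ((i : R) * a)
  have hmonic : ∀ i ∈ Finset.range p, (g i).Monic := fun i _ => monic_X_add_C _
  have hshift : taylor a (∏ i ∈ Finset.range p, g i) = ∏ i ∈ Finset.range p, g i := by
    have hg : g p = g 0 := by simp [g]
    have hstep : ∀ i, taylor a (g i) = g (i + 1) := fun i => by
      simp only [g, map_add, taylor_X, taylor_C, Nat.cast_succ, add_one_mul]; ring
    rw [← taylorAlgHom_apply, map_prod]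
    simp only [taylorAlgHom_apply, hstep]
    rw [← Nat.sub_add_cancel hp.le, Finset.prod_range_succ, Finset.prod_range_succ' g,
      Nat.sub_add_cancel hp.le, hg]
  have hN := monic_translationNorm hp a
  have hprod : (∏ i ∈ Finset.range p, g i).Monic := monic_prod_of_monic _ _ hmonic
  have hdeg : (∏ i ∈ Finset.range p, g i).degree = (translationNorm p a).degree := by
    rw [degree_eq_natDegree hprod.ne_zero, degree_eq_natDegree hN.ne_zero,
      natDegree_prod_of_monic _ _ hmonic, natDegree_translationNorm hp]
    simp only [g, natDegree_X_add_C, Finset.sum_const, Finset.card_range, smul_eq_mul, mul_one]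
  refine sub_eq_zero.mp ((eq_C_of_taylor_eq_self p ha ?_ ?_).trans ?_)
  · rw [map_sub, hshift, taylor_translationNorm]
  · calc _ < (translationNorm p a).degree :=
          degree_sub_lt_right hdeg hN.ne_zero (by rw [hprod.leadingCoeff, hN.leadingCoeff])
      _ = p := by rw [degree_eq_natDegree hN.ne_zero, natDegree_translationNorm hp]
  · rw [C_eq_zero, coeff_sub, coeff_zero_eq_eval_zero, coeff_zero_eq_eval_zero, eval_prod,
      Finset.prod_eq_zero (Finset.mem_range.mpr (Nat.zero_lt_of_lt hp)) (by simp)]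
    simp [translationNorm, (Nat.zero_lt_of_lt hp).ne']

/-- Dividing a translation-invariant `f` by the invariant monic `translationNorm p a` gives, by
uniqueness of division, an invariant quotient of smaller degree and an invariant remainder of
degree `< p`, which is constant. -/
theorem mem_adjoin_translationNorm_of_taylor_eq_self [Fact p.Prime] (ha : a ≠ 0) {f : R[X]}
    (hf : taylor a f = f) : f ∈ Algebra.adjoin R {translationNorm p a} := by
  have hp := (Fact.out : p.Prime).one_lt
  set N := translationNorm p a
  have hN : N.Monic := monic_translationNorm hp a
  have hNdeg : N.natDegree = p := natDegree_translationNorm hp a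
  have hNfix : taylor a N = N := taylor_translationNorm p a
  induction hn : f.natDegree using Nat.strong_induction_on generalizing f with
  | _ n ih =>
  rcases lt_or_ge n p with hnp | hnp
  · have hdeg : f.degree < p := degree_le_natDegree.trans_lt (by exact_mod_cast hn ▸ hnp)
    rw [eq_C_of_taylor_eq_self p ha hf hdeg]
    exact Subalgebra.algebraMap_mem _ _
  obtain ⟨hq, hr⟩ := div_modByMonic_unique (taylor a (f /ₘ N)) (taylor a (f %ₘ N)) hN
    ⟨by simpa [hf, hNfix] using congrArg (taylor a) (modByMonic_add_div f N),
      by rw [degree_taylor]; exact degree_modByMonic_lt f hN⟩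
  have hrem : f %ₘ N ∈ Algebra.adjoin R {N} := by
    rw [eq_C_of_taylor_eq_self p ha hr.symm ?_]
    · exact Subalgebra.algebraMap_mem _ _
    · rw [← hNdeg, ← degree_eq_natDegree hN.ne_zero]
      exact degree_modByMonic_lt f hN
  have hquot : f /ₘ N ∈ Algebra.adjoin R {N} :=
    ih _ (by rw [natDegree_divByMonic f hN, hn, hNdeg]; omega) hq.symm rfl
  rw [← modByMonic_add_div f N]
  exact add_mem hrem (mul_mem (Algebra.self_mem_adjoin_singleton R N) hquot)

end Polynomial

section Bivariate

open Polynomial.Bivariate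

theorem sigmaGen_equivMvPolynomial (p : ℕ) (f : (ZMod p)[X][Y]) :
    sigmaGen p (equivMvPolynomial (ZMod p) f) =
      equivMvPolynomial (ZMod p) (Polynomial.taylor Polynomial.X f) := by
  have : (sigmaGen p).comp (equivMvPolynomial (ZMod p)).toAlgHom =
      (equivMvPolynomial (ZMod p)).toAlgHom.comp
        ((Polynomial.taylorAlgHom Polynomial.X).restrictScalars (ZMod p)) := by
    apply Polynomial.algHom_ext'
    · apply Polynomial.algHom_ext
      simp [sigmaGen]
    · simp [sigmaGen]
  simpa using DFunLike.congr_fun this f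

theorem sigmaGen_eq_self_iff (p : ℕ) (P : MvPolynomial (Fin 2) (ZMod p)) :
    sigmaGen p P = P ↔ Polynomial.taylor Polynomial.X ((equivMvPolynomial (ZMod p)).symm P) =
      (equivMvPolynomial (ZMod p)).symm P := by
  obtain ⟨f, rfl⟩ := (equivMvPolynomial (ZMod p)).surjective P
  rw [sigmaGen_equivMvPolynomial, AlgEquiv.symm_apply_apply,
    (equivMvPolynomial (ZMod p)).injective.eq_iff]

theorem equivMvPolynomial_translationNorm (p : ℕ) :
    equivMvPolynomial (ZMod p) (Polynomial.translationNorm p Polynomial.X) =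
      X 1 ^ p - X 0 ^ (p - 1) * X 1 := by
  simp [Polynomial.translationNorm]

theorem prod_X_one_add_C_mul_X_zero (p : ℕ) [Fact p.Prime] :
    ∏ i ∈ Finset.range p, (X 1 + C (i : ZMod p) * X 0) =
      (X 1 ^ p - X 0 ^ (p - 1) * X 1 : MvPolynomial (Fin 2) (ZMod p)) := by
  rw [← equivMvPolynomial_translationNorm,
    ← Polynomial.prod_X_add_C_natCast_mul p Polynomial.X_ne_zero, map_prod]
  simp

theorem sigmaGen_eq_self_iff_mem_adjoin (p : ℕ) [Fact p.Prime]
    (P : MvPolynomial (Fin 2) (ZMod p)) :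
    sigmaGen p P = P ↔ P ∈ Algebra.adjoin (ZMod p)
      {(X 0 : MvPolynomial (Fin 2) (ZMod p)), X 1 ^ p - X 0 ^ (p - 1) * X 1} := by
  constructor
  · obtain ⟨f, rfl⟩ := (equivMvPolynomial (ZMod p)).surjective P
    rw [sigmaGen_eq_self_iff, AlgEquiv.symm_apply_apply]
    intro hf
    have hmem := Polynomial.mem_adjoin_translationNorm_of_taylor_eq_self p Polynomial.X_ne_zero hf
    clear hf
    induction hmem using Algebra.adjoin_induction with
    | mem x hx =>
      rw [Set.mem_singleton_iff.mp hx, equivMvPolynomial_translationNorm]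
      exact Algebra.subset_adjoin (by simp)
    | algebraMap r =>
      have hC : equivMvPolynomial (ZMod p) (Polynomial.C r) = Polynomial.aeval (X 0) r := by
        simp [equivMvPolynomial, Polynomial.eval_map, Polynomial.aeval_def,
          MvPolynomial.algebraMap_eq]
      rw [Polynomial.algebraMap_eq, hC]
      exact Algebra.adjoin_mono (by simp) (Polynomial.aeval_mem_adjoin_singleton _ _)
    | add x y _ _ hx hy => rw [map_add]; exact add_mem hx hy
    | mul x y _ _ hx hy => rw [map_mul]; exact mul_mem hx hy
  · intro hP
    refine Algebra.adjoin_le (S := AlgHom.equalizer (sigmaGen p) (AlgHom.id _ _)) ?_ hP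
    rintro _ (rfl | rfl) <;> rw [SetLike.mem_coe, AlgHom.mem_equalizer, AlgHom.id_apply]
    · simp [sigmaGen]
    · rw [← equivMvPolynomial_translationNorm, sigmaGen_equivMvPolynomial,
        Polynomial.taylor_translationNorm]

theorem coeff_eq_zero_of_sigmaGen_eq_self (p : ℕ) [Fact p.Prime] (m nn : ℕ) (lam : ℕ → ZMod p)
    (hmp : m ≤ p - 1)
    (hfix : sigmaGen p (∑ i ∈ Finset.Icc 1 m, C (lam i) * X 0 ^ (nn - i) * X 1 ^ i) =
      ∑ i ∈ Finset.Icc 1 m, C (lam i) * X 0 ^ (nn - i) * X 1 ^ i) :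
    ∀ i ∈ Finset.Icc 1 m, lam i = 0 := by
  intro i hi
  rw [sigmaGen_eq_self_iff] at hfix
  set F := (equivMvPolynomial (ZMod p)).symm
    (∑ i ∈ Finset.Icc 1 m, C (lam i) * X 0 ^ (nn - i) * X 1 ^ i)
  have hcoeff : ∀ j, F.coeff j =
      if j ∈ Finset.Icc 1 m then Polynomial.C (lam j) * Polynomial.X ^ (nn - j) else 0 := by
    intro j
    simp only [F, map_sum, map_mul, map_pow, equivMvPolynomial_symm_C, equivMvPolynomial_symm_X_0,
      equivMvPolynomial_symm_X_1]
    simp only [← Polynomial.C_pow, ← Polynomial.C_mul, Polynomial.finsetSum_coeff,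
      Polynomial.coeff_C_mul_X_pow, Finset.sum_ite_eq]
  have hdeg : F.degree < p := by
    refine Polynomial.degree_lt_iff_coeff_zero _ _ |>.mpr fun j hj => ?_
    rw [hcoeff, if_neg]
    simp only [Finset.mem_Icc]
    omega
  have := Polynomial.coeff_eq_zero_of_taylor_eq_self p Polynomial.X_ne_zero hfix hdeg
    (Nat.one_le_iff_ne_zero.mp (Finset.mem_Icc.mp hi).1)
  rw [hcoeff, if_pos hi] at this
  simpa using this

end Bivariate

theorem stmt_17_general (p : ℕ) (hp : p.Prime) :
    (∏ i ∈ Finset.range p, (X 1 + C (i : ZMod p) * X 0)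
        = (X 1 ^ p - X 0 ^ (p - 1) * X 1 : MvPolynomial (Fin 2) (ZMod p))) ∧
    (∀ P : MvPolynomial (Fin 2) (ZMod p), sigmaGen p P = P ↔
        P ∈ Algebra.adjoin (ZMod p)
          {(X 0 : MvPolynomial (Fin 2) (ZMod p)), X 1 ^ p - X 0 ^ (p - 1) * X 1}) ∧
    (∀ (m nn : ℕ) (lam : ℕ → ZMod p), 1 ≤ m → m ≤ p - 1 → m ≤ nn →
        sigmaGen p (∑ i ∈ Finset.Icc 1 m, C (lam i) * X 0 ^ (nn - i) * X 1 ^ i)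
            = ∑ i ∈ Finset.Icc 1 m, C (lam i) * X 0 ^ (nn - i) * X 1 ^ i →
        ∀ i ∈ Finset.Icc 1 m, lam i = 0) := by
  have : Fact p.Prime := ⟨hp⟩
  exact ⟨prod_X_one_add_C_mul_X_zero p, sigmaGen_eq_self_iff_mem_adjoin p,
    fun m nn lam _ hmp _ hfix => coeff_eq_zero_of_sigmaGen_eq_self p m nn lam hmp hfix⟩

/-- For the `C_p`-action on `F_p[α, β]` with generator `α ↦ α`, `β ↦ β + α`:
the norm `∏_{i=0}^{p−1}(β + iα)` equals `β^p − α^{p−1}β`; the fixed-point subring is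
generated by `α` and `β^p − α^{p−1}β`; and a homogeneous element
`∑_{i=1}^{m} λ_i α^{n−i} β^i` with `1 ≤ m ≤ p−1` is fixed only if all `λ_i = 0`. -/
theorem stmt_17 (p : ℕ) (hp : p.Prime) (hodd : Odd p) :
    (∏ i ∈ Finset.range p, (X 1 + C (i : ZMod p) * X 0)
        = (X 1 ^ p - X 0 ^ (p - 1) * X 1 : MvPolynomial (Fin 2) (ZMod p))) ∧
    (∀ P : MvPolynomial (Fin 2) (ZMod p), sigmaGen p P = P ↔
        P ∈ Algebra.adjoin (ZMod p)
          {(X 0 : MvPolynomial (Fin 2) (ZMod p)), X 1 ^ p - X 0 ^ (p - 1) * X 1}) ∧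
    (∀ (m nn : ℕ) (lam : ℕ → ZMod p), 1 ≤ m → m ≤ p - 1 → m ≤ nn →
        sigmaGen p (∑ i ∈ Finset.Icc 1 m, C (lam i) * X 0 ^ (nn - i) * X 1 ^ i)
            = ∑ i ∈ Finset.Icc 1 m, C (lam i) * X 0 ^ (nn - i) * X 1 ^ i →
        ∀ i ∈ Finset.Icc 1 m, lam i = 0) :=
  stmt_17_general p hp
end

section
/- Let N = (∏_{n=1}^∞ C₄) × (∏_{n=1}^∞ C₂) and let Q = C₂ act trivially on N. Then any central extension G of N by Q whose restriction to each C₄ factor is trivial (i.e., G contains a subgroup isomorphic to C₄ mapping onto each C₄ factor) is isomorphic as a group to N itself, hence isomorphic to the split extension; in particular there exist non-equivalent extensions of N by C₂ with isomorphic total groups. -/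
/-- The abelian group `N = (∏_{n=1}^∞ C₄) × (∏_{n=1}^∞ C₂)`, written
multiplicatively. -/
abbrev NGrp : Type := (ℕ → Multiplicative (ZMod 4)) × (ℕ → Multiplicative (ZMod 2))

/-!
Since `ι(N)` is central of index two, `G` is abelian and every element is `t ^ k * ι a`.
If `t ^ 2 = ι (1, w)` with `w = 1`, then `t` has order 2 and `G = ⟨t⟩ × ι(N) ≅ C₂ × N ≅ N`.
Otherwise, after permuting the `C₂` coordinates, `w 0 ≠ 1`; then `t` has order 4, `t ^ 2`
generates a complement of `N₀ = {(x, y) | y 0 = 1} ≅ N`, and `G = ⟨t⟩ × ι(N₀) ≅ C₄ × N ≅ N`.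

The split extension `N → C₂ × N → C₂` and the extension `C₂ × N → C₄ × N → C₂` built from
`C₂ → C₄ → C₂` both have total group `N`; they are not equivalent because only the first has
an element of order two mapping to the generator of `C₂`.
-/

open Multiplicative Function

section InternalProduct

variable {G B : Type*} [Group G] [Group B]

def zmodPowHom {n : ℕ} [NeZero n] (t : G) (ht : t ^ n = 1) : Multiplicative (ZMod n) →* G where
  toFun k := t ^ (toAdd k).val
  map_one' := by simp
  map_mul' a b := by rw [toAdd_mul, ZMod.val_add, ← pow_eq_pow_mod _ ht, pow_add]

lemma zmodPowHom_ofAdd_natCast {n : ℕ} [NeZero n] (t : G) (ht : t ^ n = 1) (k : ℕ) :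
    zmodPowHom t ht (ofAdd (k : ZMod n)) = t ^ k := by
  simp only [zmodPowHom, MonoidHom.coe_mk, OneHom.coe_mk, toAdd_ofAdd, ZMod.val_natCast]
  exact (pow_eq_pow_mod k ht).symm

lemma bijective_noncommCoprod_zmodPowHom {n : ℕ} [NeZero n] {t : G} (ht : t ^ n = 1)
    {j : B →* G} (hj : Injective j) (hcomm : ∀ g b, Commute g (j b))
    (hdisj : ∀ k : ℕ, t ^ k ∈ j.range → n ∣ k) (hgen : ∀ g, ∃ k : ℕ, ∃ b, g = t ^ k * j b) :
    Bijective ((zmodPowHom t ht).noncommCoprod j fun _ _ => hcomm _ _) := by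
  refine ⟨(injective_iff_map_eq_one _).mpr ?_, fun g => ?_⟩
  · rintro ⟨a, b⟩ h
    replace h : t ^ (toAdd a).val = j b⁻¹ := by
      rw [map_inv]; exact eq_inv_of_mul_eq_one_left h
    have ha : a = 1 := by
      have := hdisj _ ⟨b⁻¹, h.symm⟩
      rw [← toAdd_eq_zero, ← ZMod.val_eq_zero]
      exact Nat.eq_zero_of_dvd_of_lt this (ZMod.val_lt _)
    subst ha
    have hb : b = 1 := hj (by simpa [zmodPowHom] using h.symm)
    rw [hb, Prod.mk_one_one]
  · obtain ⟨k, b, rfl⟩ := hgen g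
    exact ⟨(ofAdd (k : ZMod n), b), by simp [zmodPowHom_ofAdd_natCast]⟩

end InternalProduct

lemma sq_eq_one_of_zmod_two (x : Multiplicative (ZMod 2)) : x ^ 2 = 1 := by
  revert x; decide

lemma eq_of_ne_one_of_zmod_two {x y : Multiplicative (ZMod 2)} (hx : x ≠ 1) (hy : y ≠ 1) :
    x = y := by
  revert x y; decide

lemma orderOf_eq_two_of_zmod_two {x : Multiplicative (ZMod 2)} (hx : x ≠ 1) : orderOf x = 2 :=
  orderOf_eq_prime (sq_eq_one_of_zmod_two x) hx

section CentralExtension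

variable {G A B : Type*} [Group G] [Group A] [Group B] {ι : A →* G}
  {π : G →* Multiplicative (ZMod 2)} {t : G}

lemma two_dvd_of_pow_mem_range (hker : ι.range = π.ker) (ht : π t ≠ 1) {k : ℕ}
    (hk : t ^ k ∈ ι.range) : 2 ∣ k := by
  rwa [hker, MonoidHom.mem_ker, map_pow, ← orderOf_dvd_iff_pow_eq_one,
    orderOf_eq_two_of_zmod_two ht] at hk

lemma exists_eq_pow_mul (hker : ι.range = π.ker) (ht : π t ≠ 1) (g : G) :
    ∃ k : ℕ, ∃ a, g = t ^ k * ι a := by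
  by_cases hg : π g = 1
  · obtain ⟨a, ha⟩ : g ∈ ι.range := hker ▸ hg
    exact ⟨0, a, by rw [pow_zero, one_mul, ha]⟩
  · obtain ⟨a, ha⟩ : t⁻¹ * g ∈ ι.range := by
      rw [hker, MonoidHom.mem_ker, map_mul, map_inv, eq_of_ne_one_of_zmod_two hg ht,
        inv_mul_cancel]
    exact ⟨1, a, by rw [pow_one, ha, mul_inv_cancel_left]⟩

/- `hdisj` and `hgen` say that `A` is the internal direct product of `⟨s⟩` and `β(B)`;
then `G` is the internal direct product of `⟨t⟩` and `ι(β(B))`. -/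
theorem nonempty_mulEquiv_zmod_prod_of_sq_eq (hinj : Injective ι) (hker : ι.range = π.ker)
    (hcent : ι.range ≤ Subgroup.center G) (ht : π t ≠ 1) {s : A} (hts : t ^ 2 = ι s) {n : ℕ}
    [NeZero n] (hs : orderOf s = n) {β : B →* A} (hβ : Injective β)
    (hdisj : ∀ m : ℕ, s ^ m ∈ β.range → s ^ m = 1) (hgen : ∀ a, ∃ c : ℕ, ∃ b, a = s ^ c * β b) :
    Nonempty (G ≃* Multiplicative (ZMod (2 * n)) × B) := by
  have htn : t ^ (2 * n) = 1 := by
    rw [pow_mul, hts, ← map_pow, ← hs, pow_orderOf_eq_one, map_one]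
  have hpow : ∀ m : ℕ, t ^ (2 * m) = ι (s ^ m) := fun m => by rw [pow_mul, hts, map_pow]
  refine ⟨(MulEquiv.ofBijective _ (bijective_noncommCoprod_zmodPowHom (j := ι.comp β) htn
    (hinj.comp hβ) (fun g b => Subgroup.mem_center_iff.mp (hcent ⟨β b, rfl⟩) g) ?_ ?_)).symm⟩
  · rintro k ⟨b, hb⟩
    obtain ⟨m, rfl⟩ := two_dvd_of_pow_mem_range hker ht ⟨β b, hb⟩
    rw [hpow] at hb
    have hsm : s ^ m = 1 := hdisj m ⟨b, hinj hb⟩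
    exact mul_dvd_mul_left 2 (hs ▸ orderOf_dvd_of_pow_eq_one hsm)
  · intro g
    obtain ⟨k, a, rfl⟩ := exists_eq_pow_mul hker ht g
    obtain ⟨c, b, rfl⟩ := hgen a
    refine ⟨k + 2 * c, b, ?_⟩
    rw [pow_add, hpow, map_mul, mul_assoc]
    rfl

end CentralExtension

def consMulEquiv (M : Type*) [Mul M] : M × (ℕ → M) ≃* (ℕ → M) where
  toFun p
    | 0 => p.1
    | n + 1 => p.2 n
  invFun f := (f 0, fun n => f (n + 1))
  left_inv _ := rfl
  right_inv f := funext fun n => by cases n <;> rfl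
  map_mul' _ _ := funext fun n => by cases n <;> rfl

namespace NGrp

def prodZModTwoMulEquiv : Multiplicative (ZMod 2) × NGrp ≃* NGrp where
  toFun p := (p.2.1, consMulEquiv _ (p.1, p.2.2))
  invFun q := (q.2 0, q.1, fun n => q.2 (n + 1))
  left_inv _ := rfl
  right_inv q := Prod.ext rfl ((consMulEquiv _).apply_symm_apply q.2)
  map_mul' p q := Prod.ext rfl (map_mul (consMulEquiv _) (p.1, p.2.2) (q.1, q.2.2))

def prodZModFourMulEquiv : Multiplicative (ZMod 4) × NGrp ≃* NGrp :=
  MulEquiv.prodAssoc.symm.trans ((consMulEquiv _).prodCongr (MulEquiv.refl _))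

variable {G : Type*} [Group G] {ι : NGrp →* G} {π : G →* Multiplicative (ZMod 2)} {t : G}

lemma nonempty_mulEquiv_of_sq_eq_one (hinj : Injective ι) (hker : ι.range = π.ker)
    (hcent : ι.range ≤ Subgroup.center G) (ht : π t ≠ 1) (ht2 : t ^ 2 = 1) :
    Nonempty (G ≃* NGrp) := by
  obtain ⟨e⟩ := nonempty_mulEquiv_zmod_prod_of_sq_eq hinj hker hcent ht
    (ht2.trans ι.map_one.symm) orderOf_one (β := MonoidHom.id _) injective_id
    (fun m _ => one_pow m) (fun a => ⟨0, a, by simp⟩)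
  exact ⟨e.trans prodZModTwoMulEquiv⟩

lemma nonempty_mulEquiv_of_sq_eq_of_apply_zero_ne_one (hinj : Injective ι)
    (hker : ι.range = π.ker) (hcent : ι.range ≤ Subgroup.center G) (ht : π t ≠ 1)
    {w : ℕ → Multiplicative (ZMod 2)} (hw : w 0 ≠ 1) (htw : t ^ 2 = ι (1, w)) :
    Nonempty (G ≃* NGrp) := by
  have hs : orderOf ((1, w) : NGrp) = 2 := by
    refine orderOf_eq_prime (Prod.ext (one_pow 2) (funext fun j => sq_eq_one_of_zmod_two (w j)))
      fun h => hw (congrFun (congrArg Prod.snd h) 0)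
  set β : NGrp →* NGrp :=
    (MonoidHom.id _).prodMap ((consMulEquiv _).toMonoidHom.comp (MonoidHom.inr _ _))
  have hβ : Injective β :=
    injective_id.prodMap ((consMulEquiv _).injective.comp (Prod.mk_right_injective 1))
  have hdisj : ∀ m : ℕ, (1, w) ^ m ∈ β.range → ((1, w) : NGrp) ^ m = 1 := by
    rintro m ⟨b, hb⟩
    have hwm : w 0 ^ m = 1 := (congrFun (congrArg Prod.snd hb) 0).symm
    rw [← orderOf_dvd_iff_pow_eq_one, orderOf_eq_two_of_zmod_two hw] at hwm
    rwa [← orderOf_dvd_iff_pow_eq_one, hs]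
  have hgen : ∀ a : NGrp, ∃ c : ℕ, ∃ b, a = (1, w) ^ c * β b := by
    rintro ⟨x, y⟩
    obtain ⟨c, hc⟩ : ∃ c : ℕ, ((w ^ c)⁻¹ * y) 0 = 1 := by
      by_cases hy : y 0 = 1
      · exact ⟨0, by simpa using hy⟩
      · exact ⟨1, by simp [eq_of_ne_one_of_zmod_two hw hy]⟩
    refine ⟨c, (x, fun n => ((w ^ c)⁻¹ * y) (n + 1)), ?_⟩
    have hβb : β (x, fun n => ((w ^ c)⁻¹ * y) (n + 1)) = (x, (w ^ c)⁻¹ * y) := by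
      show (x, consMulEquiv _ (1, _)) = _
      rw [← hc]; exact congrArg (Prod.mk x) ((consMulEquiv _).apply_symm_apply _)
    rw [hβb]
    exact Prod.ext (by simp) (by simp)
  obtain ⟨e⟩ := nonempty_mulEquiv_zmod_prod_of_sq_eq hinj hker hcent ht htw hs hβ hdisj hgen
  exact ⟨e.trans prodZModFourMulEquiv⟩

lemma nonempty_mulEquiv_of_sq_eq_of_ne_one (hinj : Injective ι) (hker : ι.range = π.ker)
    (hcent : ι.range ≤ Subgroup.center G) (ht : π t ≠ 1) {w : ℕ → Multiplicative (ZMod 2)}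
    (hw : w ≠ 1) (htw : t ^ 2 = ι (1, w)) : Nonempty (G ≃* NGrp) := by
  obtain ⟨i, hi⟩ := Function.ne_iff.mp hw
  set α : NGrp ≃* NGrp :=
    (MulEquiv.refl _).prodCongr (MulEquiv.arrowCongr (Equiv.swap 0 i) (MulEquiv.refl _))
  have hrange : (ι.comp α.toMonoidHom).range = ι.range := by
    rw [MonoidHom.range_comp, MonoidHom.range_eq_top.mpr α.surjective, ← MonoidHom.range_eq_map]
  refine nonempty_mulEquiv_of_sq_eq_of_apply_zero_ne_one (ι := ι.comp α.toMonoidHom)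
    (hinj.comp α.injective) (hrange.trans hker) (hrange ▸ hcent) ht (w := w ∘ Equiv.swap 0 i)
    (by simpa using hi) ?_
  rw [htw]
  exact congrArg ι (Prod.ext rfl (funext fun n => by simp [α, MulEquiv.prodCongr]))

lemma nonempty_mulEquiv_of_sq_eq (hinj : Injective ι) (hker : ι.range = π.ker)
    (hcent : ι.range ≤ Subgroup.center G) (ht : π t ≠ 1) {w : ℕ → Multiplicative (ZMod 2)}
    (htw : t ^ 2 = ι (1, w)) : Nonempty (G ≃* NGrp) := by
  by_cases hw : w = 1
  · refine nonempty_mulEquiv_of_sq_eq_one hinj hker hcent ht ?_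
    rw [htw, hw, Prod.mk_one_one, map_one]
  · exact nonempty_mulEquiv_of_sq_eq_of_ne_one hinj hker hcent ht hw htw

end NGrp

section ShortExact

variable {A A' B B' Q : Type*} [Group A] [Group A'] [Group B] [Group B'] [Group Q]
  {ι : A →* B} {π : B →* Q}

def IsShortExact (ι : A →* B) (π : B →* Q) : Prop :=
  Injective ι ∧ Surjective π ∧ ι.range = π.ker

lemma isShortExact_inr_fst : IsShortExact (MonoidHom.inr Q A) (MonoidHom.fst Q A) := by
  refine ⟨Prod.mk_right_injective 1, Prod.fst_surjective, ?_⟩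
  ext ⟨q, a⟩
  simp [Subgroup.mem_prod, eq_comm]

lemma IsShortExact.prodMap_id (h : IsShortExact ι π) :
    IsShortExact (ι.prodMap (MonoidHom.id A')) (π.comp (MonoidHom.fst B A')) := by
  refine ⟨h.1.prodMap injective_id, h.2.1.comp Prod.fst_surjective, ?_⟩
  rw [MonoidHom.range_prodMap, (MonoidHom.id A').range_eq_top.mpr surjective_id, h.2.2]
  ext; simp [Subgroup.mem_prod]

lemma IsShortExact.comp_mulEquiv (h : IsShortExact ι π) (e : A' ≃* A) :
    IsShortExact (ι.comp e.toMonoidHom) π := by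
  refine ⟨h.1.comp e.injective, h.2.1, ?_⟩
  rw [MonoidHom.range_comp, MonoidHom.range_eq_top.mpr e.surjective, ← MonoidHom.range_eq_map,
    h.2.2]

lemma IsShortExact.mulEquiv_comp (h : IsShortExact ι π) (f : B ≃* B') :
    IsShortExact (f.toMonoidHom.comp ι) (π.comp f.symm.toMonoidHom) := by
  refine ⟨f.injective.comp h.1, h.2.1.comp f.symm.surjective, ?_⟩
  rw [MonoidHom.range_comp, h.2.2, Subgroup.map_equiv_eq_comap_symm', MonoidHom.comap_ker]

end ShortExact

def zmodTwoToFour : Multiplicative (ZMod 2) →* Multiplicative (ZMod 4) :=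
  zmodPowHom (ofAdd 2) (by decide)

def zmodFourToTwo : Multiplicative (ZMod 4) →* Multiplicative (ZMod 2) :=
  (ZMod.castHom (by norm_num : 2 ∣ 4) (ZMod 2)).toAddMonoidHom.toMultiplicative

lemma isShortExact_zmodTwoToFour_zmodFourToTwo : IsShortExact zmodTwoToFour zmodFourToTwo := by
  refine ⟨by decide, by decide, ?_⟩
  ext z
  revert z
  decide

lemma zmodFourToTwo_eq_one_of_sq_eq_one :
    ∀ z : Multiplicative (ZMod 4), z ^ 2 = 1 → zmodFourToTwo z = 1 := by
  decide

namespace NGrp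

theorem exists_extensions_not_equivalent :
    ∃ (ι₁ : NGrp →* NGrp) (π₁ : NGrp →* Multiplicative (ZMod 2))
       (ι₂ : NGrp →* NGrp) (π₂ : NGrp →* Multiplicative (ZMod 2)),
      Injective ι₁ ∧ Surjective π₁ ∧ ι₁.range = π₁.ker ∧
      Injective ι₂ ∧ Surjective π₂ ∧ ι₂.range = π₂.ker ∧
      ¬ ∃ θ : NGrp ≃* NGrp, (∀ x : NGrp, θ (ι₁ x) = ι₂ x) ∧
          (∀ g : NGrp, π₂ (θ g) = π₁ g) := by
  obtain ⟨hι₁, hπ₁, h₁⟩ := isShortExact_inr_fst.mulEquiv_comp prodZModTwoMulEquiv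
  obtain ⟨hι₂, hπ₂, h₂⟩ :=
    ((isShortExact_zmodTwoToFour_zmodFourToTwo.prodMap_id (A' := NGrp)).comp_mulEquiv
      prodZModTwoMulEquiv.symm).mulEquiv_comp prodZModFourMulEquiv
  refine ⟨_, _, _, _, hι₁, hπ₁, h₁, hι₂, hπ₂, h₂, ?_⟩
  rintro ⟨θ, -, hθ⟩
  set g := prodZModTwoMulEquiv (ofAdd 1, 1)
  have hg : g ^ 2 = 1 := by
    rw [← map_pow, Prod.pow_mk, sq_eq_one_of_zmod_two, one_pow, Prod.mk_one_one, map_one]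
  have hθg := zmodFourToTwo_eq_one_of_sq_eq_one (prodZModFourMulEquiv.symm (θ g)).1 (by
    rw [← Prod.pow_fst, ← map_pow, ← map_pow, hg, map_one, map_one, Prod.fst_one])
  exact absurd ((hθ g).symm.trans hθg) (by simp [g])

end NGrp

/-- (Rickard's example.)  Any central extension `1 → N → G → C₂ → 1` of
`N = (∏ C₄) × (∏ C₂)` by `C₂` (trivial action) whose class restricts to zero in
each `H²(C₂; C₄)` factor — concretely, some lift `t` of the generator of `C₂`
satisfies `t² ∈ ι({1} × ∏ C₂)` — has total group isomorphic to `N` itself, hence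
to the split extension.  In particular there exist non-equivalent extensions of
`N` by `C₂` with isomorphic total groups. -/
theorem stmt_18 :
    (∀ (G : Type) [Group G], ∀ (ι : NGrp →* G) (π : G →* Multiplicative (ZMod 2)),
      Function.Injective ι → Function.Surjective π → ι.range = π.ker →
      ι.range ≤ Subgroup.center G →
      (∃ t : G, π t ≠ 1 ∧ ∃ w : ℕ → Multiplicative (ZMod 2), t ^ 2 = ι (1, w)) →
      Nonempty (G ≃* NGrp)) ∧
    (∃ (ι₁ : NGrp →* NGrp) (π₁ : NGrp →* Multiplicative (ZMod 2))
       (ι₂ : NGrp →* NGrp) (π₂ : NGrp →* Multiplicative (ZMod 2)),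
      Function.Injective ι₁ ∧ Function.Surjective π₁ ∧ ι₁.range = π₁.ker ∧
      Function.Injective ι₂ ∧ Function.Surjective π₂ ∧ ι₂.range = π₂.ker ∧
      ¬ ∃ θ : NGrp ≃* NGrp, (∀ x : NGrp, θ (ι₁ x) = ι₂ x) ∧
          (∀ g : NGrp, π₂ (θ g) = π₁ g)) :=
  ⟨fun _ _ _ _ hinj _ hker hcent ⟨_, ht, _, htw⟩ =>
    NGrp.nonempty_mulEquiv_of_sq_eq hinj hker hcent ht htw,
  NGrp.exists_extensions_not_equivalent⟩
end
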